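/- In the semigroup H, for any word U in the letters a1, a2, a3: L·U·U = 0. (Special case: the image under left multiplication by L of any square is zero.) -/

import Mathlib

inductive Phi
  | L | M | P | Q | R | g | s1 | s2 | t1 | t2 | t3 | a1 | a2 | a3
deriving DecidableEq

open Phi

abbrev W0 := WithZero (FreeMonoid Phi)

def w (l : List Phi) : W0 := ((FreeMonoid.ofList l : FreeMonoid Phi) : W0)

def ai : Fin 3 → Phi
  | 0 => a1 | 1 => a2 | 2 => a3

def ti : Fin 3 → Phi
  | 0 => t1 | 1 => t2 | 2 => t3

def si : Fin 2 → Phi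
  | 0 => s1 | 1 => s2

/-- `x` is one of the letters `a1, a2, a3`. -/
def isA (x : Phi) : Prop := x = a1 ∨ x = a2 ∨ x = a3

/-- The defining relations (1)–(14) of the semigroup `H`. -/
inductive rel : W0 → W0 → Prop
  | r1L (x : Phi) : rel (w [x, L]) 0
  | r1M (x : Phi) : rel (w [x, M]) 0
  | r2 : rel (w [L]) (w [M, P, g])
  | r3 (i : Fin 3) : rel (w [g, ai i]) (w [ai i, g])
  | r4 (x : Phi) (h : ¬ isA x) : rel (w [g, x]) 0
  | r5 (i j : Fin 3) : rel (w [ai i, g, ai j]) (w [ai i, R, s1, Q, ai j])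
  | r6 (i : Fin 3) (x : Phi) (h : x = R ∨ isA x) : rel (w [ti i, x]) (w [x, ti i])
  | r7 (i : Fin 3) : rel (w [P, ai i, ti i]) (w [ai i, P, s1])
  | r8 (i j : Fin 3) (h : i ≠ j) : rel (w [P, ai j, ti i]) (w [ai j, P, s2])
  | r9 (i : Fin 3) (j : Fin 2) : rel (w [si j, ai i]) (w [ai i, si j])
  | r10 : rel (w [s1, R]) (w [R, s1])
  | r11 (i : Fin 3) : rel (w [s1, Q, ai i]) (w [ti i, ai i, Q])
  | r12 : rel (w [P, R, s1]) 0
  | r13 (i : Fin 3) : rel (w [s2, R, ai i]) (w [ai i, s2, R])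
  | r14 (i : Fin 3) : rel (w [s2, R, Q, ai i]) (w [R, ti i, ai i, Q])

/-- The congruence on the free monoid with zero generated by the relations. -/
def hCon : Con W0 := conGen rel

/-- The semigroup (with zero) `H` of the paper. -/
abbrev H := hCon.Quotient

/-- The quotient map. -/
def q : W0 →* H := hCon.mk'

/-- `l` is a word in the letters `a1, a2, a3`. -/
def Aword (l : List Phi) : Prop := ∀ x ∈ l, isA x

/-- `l` is square-free: it contains no factor `Y ++ Y` with `Y` nonempty. -/
def SqFree (l : List Phi) : Prop := ∀ Y : List Phi, Y ≠ [] → ¬ (Y ++ Y) <:+: l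

/-! Relation (2) gives `L U U = M P g U U`; by (3) `g` moves past the first copy of `U`, and (5),
applied where the two copies meet, yields `M P U R s1 Q U`. Now the letters of the second copy are
carried through the first one by one: for the leading letter `a`, (11) turns `s1 Q a` into `t a Q`,
`t` travels left to `P a`, where (7) turns `P a t` into `a P s1`, and `s1` travels right again,
leaving `a P U' R a s1 Q U'`. Once the second copy is used up, `P R s1 = 0` by (12). -/

lemma exists_ai_eq {x : Phi} (h : isA x) : ∃ i : Fin 3, x = ai i := by
  rcases h with h | h | h
  exacts [⟨0, h⟩, ⟨1, h⟩, ⟨2, h⟩]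

lemma isA_ai (i : Fin 3) : isA (ai i) := by
  fin_cases i <;> simp [ai, isA]

lemma w_append (A B : List Phi) : w (A ++ B) = w A * w B := by
  unfold w; rw [← WithZero.coe_mul]; rfl

lemma q_eq_of_rel {u v : W0} (h : rel u v) : q u = q v :=
  (Con.eq hCon).mpr (ConGen.Rel.of u v h)

lemma q_w_append_append (A B : List Phi) {u v : List Phi} (h : q (w u) = q (w v)) :
    q (w (A ++ u ++ B)) = q (w (A ++ v ++ B)) := by
  simp only [w_append, map_mul, h]

lemma q_w_append_append_eq_zero (A B : List Phi) {u : List Phi} (h : q (w u) = q 0) :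
    q (w (A ++ u ++ B)) = q 0 := by
  rw [w_append, w_append, map_mul, map_mul, h, ← map_mul, ← map_mul, mul_zero, zero_mul]

lemma q_w_cons_eq_zero (x : Phi) {u : List Phi} (h : q (w u) = q 0) :
    q (w (x :: u)) = q 0 := by
  simpa using q_w_append_append_eq_zero [x] [] h

lemma q_w_cons_eq_append_singleton {x : Phi} {V : List Phi}
    (h : ∀ y ∈ V, q (w [x, y]) = q (w [y, x])) : q (w (x :: V)) = q (w (V ++ [x])) := by
  induction V with
  | nil => rfl
  | cons y V ih =>
    calc q (w (x :: y :: V)) = q (w (y :: x :: V)) := by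
          simpa using q_w_append_append [] V (h y List.mem_cons_self)
      _ = q (w (y :: (V ++ [x]))) := by
          simpa using q_w_append_append [y] [] (ih fun z hz => h z (List.mem_cons_of_mem y hz))

lemma q_w_g_cons {V : List Phi} (hV : Aword V) : q (w (g :: V)) = q (w (V ++ [g])) :=
  q_w_cons_eq_append_singleton fun y hy => by
    obtain ⟨i, rfl⟩ := exists_ai_eq (hV y hy)
    exact q_eq_of_rel (rel.r3 i)

lemma q_w_ti_cons (i : Fin 3) {V : List Phi} (hV : ∀ y ∈ V, y = R ∨ isA y) :
    q (w (ti i :: V)) = q (w (V ++ [ti i])) :=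
  q_w_cons_eq_append_singleton fun y hy => q_eq_of_rel (rel.r6 i y (hV y hy))

lemma q_w_s1_cons {V : List Phi} (hV : ∀ y ∈ V, y = R ∨ isA y) :
    q (w (s1 :: V)) = q (w (V ++ [s1])) :=
  q_w_cons_eq_append_singleton fun y hy => by
    rcases hV y hy with rfl | hy
    · exact q_eq_of_rel rel.r10
    · obtain ⟨i, rfl⟩ := exists_ai_eq hy
      exact q_eq_of_rel (rel.r9 i 0)

lemma q_w_P_ai_eq_ai_P (i : Fin 3) {V D : List Phi} (hV : Aword V) (hD : Aword D) :
    q (w (P :: ai i :: V ++ R :: D ++ [s1, Q, ai i])) =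
      q (w (ai i :: P :: V ++ R :: D ++ [ai i, s1, Q])) := by
  have hVRD : ∀ y ∈ V ++ R :: D, y = R ∨ isA y := by
    simp only [List.mem_append, List.mem_cons]
    rintro y (hy | rfl | hy)
    exacts [Or.inr (hV y hy), Or.inl rfl, Or.inr (hD y hy)]
  have hVRDa : ∀ y ∈ V ++ R :: D ++ [ai i], y = R ∨ isA y := by
    simp only [List.mem_append, List.mem_singleton]
    rintro y (hy | rfl)
    exacts [hVRD y (List.mem_append.mpr hy), Or.inr (isA_ai i)]
  calc q (w (P :: ai i :: V ++ R :: D ++ [s1, Q, ai i]))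
      = q (w (P :: ai i :: V ++ R :: D ++ [ti i, ai i, Q])) := by
        simpa using q_w_append_append (P :: ai i :: V ++ R :: D) [] (q_eq_of_rel (rel.r11 i))
    _ = q (w ([P, ai i, ti i] ++ V ++ R :: D ++ [ai i, Q])) := by
        simpa using q_w_append_append [P, ai i] [ai i, Q] (q_w_ti_cons i hVRD).symm
    _ = q (w ([ai i, P, s1] ++ V ++ R :: D ++ [ai i, Q])) := by
        simpa using q_w_append_append [] (V ++ R :: D ++ [ai i, Q]) (q_eq_of_rel (rel.r7 i))
    _ = q (w (ai i :: P :: V ++ R :: D ++ [ai i, s1, Q])) := by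
        simpa using q_w_append_append [ai i, P] [Q] (q_w_s1_cons hVRDa)

lemma q_w_P_R_s1_Q_eq_zero {V D : List Phi} (hV : Aword V) (hD : Aword D) :
    q (w (P :: V ++ R :: D ++ s1 :: Q :: V)) = q 0 := by
  induction V generalizing D with
  | nil =>
    calc q (w (P :: [] ++ R :: D ++ s1 :: Q :: []))
        = q (w ([P, R, s1] ++ D ++ [Q])) := by
          simpa using q_w_append_append [P, R] [Q] (q_w_s1_cons fun y hy => Or.inr (hD y hy)).symm
      _ = q 0 := by simpa using q_w_append_append_eq_zero [] (D ++ [Q]) (q_eq_of_rel rel.r12)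
  | cons a V ih =>
    obtain ⟨i, rfl⟩ := exists_ai_eq (hV a List.mem_cons_self)
    have hV' : Aword V := fun y hy => hV y (List.mem_cons_of_mem _ hy)
    have hDa : Aword (D ++ [ai i]) := by
      simp only [Aword, List.mem_append, List.mem_singleton]
      rintro y (hy | rfl)
      exacts [hD y hy, isA_ai i]
    calc q (w (P :: (ai i :: V) ++ R :: D ++ s1 :: Q :: ai i :: V))
        = q (w (ai i :: (P :: V ++ R :: (D ++ [ai i]) ++ s1 :: Q :: V))) := by
          simpa using q_w_append_append [] V (q_w_P_ai_eq_ai_P i hV' hD)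
      _ = q 0 := q_w_cons_eq_zero _ (ih hV' hDa)

lemma q_w_append_g_append {U : List Phi} (hU : Aword U) (hUne : U ≠ []) :
    q (w (U ++ [g] ++ U)) = q (w (U ++ [R, s1, Q] ++ U)) := by
  obtain ⟨U0, a, hU0⟩ := List.eq_nil_or_concat U |>.resolve_left hUne
  obtain ⟨b, U1, hU1⟩ := List.exists_cons_of_ne_nil hUne
  obtain ⟨i, rfl⟩ := exists_ai_eq (hU a (by simp [hU0]))
  obtain ⟨j, rfl⟩ := exists_ai_eq (hU b (by simp [hU1]))
  have hsplit (X : List Phi) : U ++ X ++ U = U0 ++ (ai i :: X ++ [ai j]) ++ U1 := by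
    nth_rw 1 [hU0]; rw [hU1]; simp
  rw [hsplit, hsplit]
  exact q_w_append_append U0 U1 (q_eq_of_rel (rel.r5 i j))

/-- for any nonempty word `U` in `a1,a2,a3`: `L·U·U = 0`. -/
theorem stmt16 (U : List Phi) (hU : Aword U) (hUne : U ≠ []) :
    q (w (L :: (U ++ U))) = q 0 := by
  calc q (w (L :: (U ++ U))) = q (w ([M, P, g] ++ U ++ U)) := by
        simpa using q_w_append_append [] (U ++ U) (q_eq_of_rel rel.r2)
    _ = q (w ([M, P] ++ (U ++ [g] ++ U))) := by
        simpa using q_w_append_append [M, P] U (q_w_g_cons hU)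
    _ = q (w (M :: (P :: U ++ R :: [] ++ s1 :: Q :: U))) := by
        simpa using q_w_append_append [M, P] [] (q_w_append_g_append hU hUne)
    _ = q 0 := q_w_cons_eq_zero M (q_w_P_R_s1_Q_eq_zero hU fun _ h => nomatch h)
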